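/- One-step-ahead predictive distribution: under the same HMM as in the filtering theorem, for each t = 1,...,T−1, p(z_{t+1} | τ_{1:t}) ∝ Σ_k N_N(z_{t+1} | μ̃_k, I_N) q_{k,t+1}(A_{1:t}), i.e., the predictive density of the next latent state given the ranks observed so far is proportional to a finite mixture of N-dimensional Gaussians with means μ̃_k. -/

import Mathlib

open Set MeasureTheory

/-- The N-dimensional Gaussian density with mean μ and identity covariance. -/
noncomputable def gaussPdf (N : ℕ) (μ z : Fin N → ℝ) : ℝ :=
  (2 * Real.pi) ^ (-(N : ℝ) / 2) * Real.exp (-(∑ i, (z i - μ i) ^ 2) / 2)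

/-- The order cone of a permutation τ. -/
def orderCone (N : ℕ) (τ : Equiv.Perm (Fin N)) : Set (Fin N → ℝ) :=
  {z | ∀ i j, z i < z j ↔ τ i < τ j}

/-- Product cell C_k = C_{k_1} × ... × C_{k_N} of a multi-index k. -/
def cellProd (N K : ℕ) (C : Fin K → Set ℝ) (k : Fin N → Fin K) : Set (Fin N → ℝ) :=
  {z | ∀ i, z i ∈ C (k i)}

/-!
Since `f` equals `μ̃ₖ` on each product cell `Cₖ`, splitting `∫ N(z | f z', I) α(z') dz'` over the
cells sends a Gaussian mixture restricted to `A` to a Gaussian mixture with the same component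
means, whose weights are the masses of the cells `Cₖ ∩ A` under the old components; this is
exactly the recursion defining `q`. By induction `α t = 1_{A t} · ∑ₖ N(· | μ̃ₖ, I) q_{k,t}`, and
one more propagation step gives the predictive density, with constant `1`.
-/

open ProbabilityTheory

theorem gaussPdf_eq_prod_gaussianPDFReal (N : ℕ) (μ z : Fin N → ℝ) :
    gaussPdf N μ z = ∏ i, gaussianPDFReal (μ i) 1 (z i) := by
  simp only [gaussPdf, gaussianPDFReal, NNReal.coe_one, mul_one, Finset.prod_mul_distrib,
    Finset.prod_const, Finset.card_univ, Fintype.card_fin, ← Real.exp_sum]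
  congr 1
  · rw [Real.sqrt_eq_rpow, ← Real.rpow_neg (by positivity), ← Real.rpow_natCast,
      ← Real.rpow_mul (by positivity)]
    ring_nf
  · rw [← Finset.sum_div, Finset.sum_neg_distrib]

theorem integrable_gaussPdf (N : ℕ) (μ : Fin N → ℝ) : Integrable (gaussPdf N μ) := by
  simp_rw [funext (gaussPdf_eq_prod_gaussianPDFReal N μ)]
  exact Integrable.fintype_prod fun i => integrable_gaussianPDFReal (μ i) 1

theorem measurableSet_orderCone (N : ℕ) (τ : Equiv.Perm (Fin N)) :
    MeasurableSet (orderCone N τ) :=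
  Measurable.setOf <| Measurable.forall fun i => Measurable.forall fun j =>
    (measurableSet_lt (measurable_pi_apply i) (measurable_pi_apply j)).mem.iff measurable_const

noncomputable def gaussMixture (N K : ℕ) (μt : Fin K → ℝ) (w : (Fin N → Fin K) → ℝ)
    (z : Fin N → ℝ) : ℝ :=
  ∑ k, gaussPdf N (fun i => μt (k i)) z * w k

theorem integrable_gaussMixture (N K : ℕ) (μt : Fin K → ℝ) (w : (Fin N → Fin K) → ℝ) :
    Integrable (gaussMixture N K μt w) :=
  integrable_finsetSum _ fun k _ => (integrable_gaussPdf N _).mul_const (w k)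

section StepTransition

variable {N K : ℕ} {C : Fin K → Set ℝ} {μt : Fin K → ℝ} {f : (Fin N → ℝ) → (Fin N → ℝ)}

theorem measurableSet_cellProd (hC : ∀ k, MeasurableSet (C k)) (k : Fin N → Fin K) :
    MeasurableSet (cellProd N K C k) := by
  have : cellProd N K C k = univ.pi fun i => C (k i) := by ext; simp [cellProd]
  exact this ▸ MeasurableSet.univ_pi fun i => hC (k i)

theorem iUnion_cellProd (hcover : ⋃ k, C k = univ) : ⋃ k, cellProd N K C k = univ := by
  refine eq_univ_of_forall fun z => mem_iUnion.2 ?_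
  choose k hk using fun i => mem_iUnion.1 (hcover ▸ mem_univ (z i))
  exact ⟨k, hk⟩

theorem pairwise_disjoint_cellProd (hdisj : ∀ k k', k ≠ k' → Disjoint (C k) (C k')) :
    Pairwise fun k k' => Disjoint (cellProd N K C k) (cellProd N K C k') := by
  intro k k' hne
  obtain ⟨i, hi⟩ := Function.ne_iff.1 hne
  exact disjoint_left.2 fun z hz hz' => disjoint_left.1 (hdisj _ _ hi) (hz i) (hz' i)

theorem eq_of_mem_cellProd (hf : ∀ z i k, z i ∈ C k → f z i = μt k) {k : Fin N → Fin K}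
    {z : Fin N → ℝ} (hz : z ∈ cellProd N K C k) : f z = fun i => μt (k i) :=
  funext fun i => hf z i (k i) (hz i)

theorem setIntegral_comp_step_mul (hC : ∀ k, MeasurableSet (C k))
    (hdisj : ∀ k k', k ≠ k' → Disjoint (C k) (C k')) (hcover : ⋃ k, C k = univ)
    (hf : ∀ z i k, z i ∈ C k → f z i = μt k)
    (F : (Fin N → ℝ) → ℝ) {S : Set (Fin N → ℝ)} (hS : MeasurableSet S)
    {h : (Fin N → ℝ) → ℝ} (hh : IntegrableOn h S) :
    ∫ z in S, F (f z) * h z = ∑ k, F (fun i => μt (k i)) * ∫ z in cellProd N K C k ∩ S, h z := by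
  have hpiece : ∀ k, MeasurableSet (cellProd N K C k ∩ S) :=
    fun k => (measurableSet_cellProd hC k).inter hS
  have hconst : ∀ k, EqOn (fun z => F (f z) * h z) (fun z => F (fun i => μt (k i)) * h z)
      (cellProd N K C k ∩ S) :=
    fun k z hz => by simp only [eq_of_mem_cellProd hf hz.1]
  have hsplit := integral_iUnion_fintype hpiece
    (fun k k' hne => ((pairwise_disjoint_cellProd hdisj hne).mono inter_subset_left
      inter_subset_left))
    (fun k => IntegrableOn.congr_fun ((hh.mono_set inter_subset_right).const_mul _)
      (hconst k).symm (hpiece k))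
    (f := fun z => F (f z) * h z) (μ := volume)
  rw [← iUnion_inter, iUnion_cellProd hcover, univ_inter] at hsplit
  rw [hsplit]
  refine Finset.sum_congr rfl fun k _ => ?_
  rw [setIntegral_congr_fun (hpiece k) (hconst k), integral_const_mul]

theorem integral_gaussPdf_mul_indicator_gaussMixture (hC : ∀ k, MeasurableSet (C k))
    (hdisj : ∀ k k', k ≠ k' → Disjoint (C k) (C k')) (hcover : ⋃ k, C k = univ)
    (hf : ∀ z i k, z i ∈ C k → f z i = μt k) {A : Set (Fin N → ℝ)} (hA : MeasurableSet A)
    (w : (Fin N → Fin K) → ℝ) (z : Fin N → ℝ) :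
    ∫ z', gaussPdf N (f z') z * A.indicator (gaussMixture N K μt w) z' =
      gaussMixture N K μt (fun k => ∑ m, w m *
        ∫ z in cellProd N K C k ∩ A, gaussPdf N (fun i => μt (m i)) z) z := by
  have hind : (fun z' => gaussPdf N (f z') z * A.indicator (gaussMixture N K μt w) z') =
      A.indicator fun z' => gaussPdf N (f z') z * gaussMixture N K μt w z' :=
    funext fun z' => (indicator_mul_right A (fun z' => gaussPdf N (f z') z) _).symm
  rw [hind, integral_indicator hA, setIntegral_comp_step_mul hC hdisj hcover hf (gaussPdf N · z) hA
    (integrable_gaussMixture N K μt w).integrableOn]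
  unfold gaussMixture
  refine Finset.sum_congr rfl fun k _ => ?_
  rw [integral_finsetSum _ fun m _ =>
    ((integrable_gaussPdf N _).mul_const _).integrableOn]
  simp_rw [integral_mul_const, mul_comm (w _)]

theorem filter_eq_indicator_gaussMixture (hC : ∀ k, MeasurableSet (C k))
    (hdisj : ∀ k k', k ≠ k' → Disjoint (C k) (C k')) (hcover : ⋃ k, C k = univ)
    (hf : ∀ z i k, z i ∈ C k → f z i = μt k) {A : ℕ → Set (Fin N → ℝ)}
    (hA : ∀ t, MeasurableSet (A t)) {zprior : Fin N → ℝ} {α : ℕ → (Fin N → ℝ) → ℝ}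
    {q : ℕ → (Fin N → Fin K) → ℝ}
    (hα1 : ∀ z, α 1 z =
      (A 1).indicator (fun z => ∫ z0, gaussPdf N (f z0) z * gaussPdf N zprior z0) z)
    (hαs : ∀ t, 1 ≤ t → ∀ z, α (t + 1) z =
      (A (t + 1)).indicator (fun z => ∫ z', gaussPdf N (f z') z * α t z') z)
    (hq1 : ∀ k, q 1 k = ∫ z0 in cellProd N K C k, gaussPdf N zprior z0)
    (hqs : ∀ t, 1 ≤ t → ∀ k, q (t + 1) k =
      ∑ m : Fin N → Fin K, q t m *
        ∫ z in (cellProd N K C k ∩ A t), gaussPdf N (fun i => μt (m i)) z)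
    {t : ℕ} (ht : 1 ≤ t) :
    α t = (A t).indicator (gaussMixture N K μt (q t)) := by
  induction t, ht using Nat.le_induction with
  | base =>
    ext z
    rw [hα1]
    congr 1
    ext z
    rw [← setIntegral_univ, setIntegral_comp_step_mul hC hdisj hcover hf (gaussPdf N · z)
      MeasurableSet.univ (integrable_gaussPdf N zprior).integrableOn]
    simp only [inter_univ, ← hq1]
    rfl
  | succ t ht ih =>
    ext z
    rw [hαs t ht, ih]
    congr 1
    ext z
    rw [integral_gaussPdf_mul_indicator_gaussMixture hC hdisj hcover hf (hA t), ← funext (hqs t ht)]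

end StepTransition

/-- `α t` is the unnormalized filtering density of `z_t` given `τ_{1:t}`, so the left-hand side
is the unnormalized predictive density of `z_{t+1}`. -/
theorem stmt_12_general (N K : ℕ)
    (C : Fin K → Set ℝ)
    (hCmeas : ∀ k, MeasurableSet (C k))
    (hCdisj : ∀ k k' : Fin K, k ≠ k' → Disjoint (C k) (C k'))
    (hCcover : (⋃ k, C k) = Set.univ)
    (μt : Fin K → ℝ)
    (f : (Fin N → ℝ) → (Fin N → ℝ))
    (hf : ∀ (z : Fin N → ℝ) (i : Fin N) (k : Fin K), z i ∈ C k → f z i = μt k)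
    (τ : ℕ → Equiv.Perm (Fin N))
    (A : ℕ → Set (Fin N → ℝ))
    (hA : ∀ t, A t = orderCone N (τ t))
    (zprior : Fin N → ℝ)
    (α : ℕ → (Fin N → ℝ) → ℝ)
    (q : ℕ → (Fin N → Fin K) → ℝ)
    (hα1 : ∀ z, α 1 z =
      (A 1).indicator (fun z => ∫ z0, gaussPdf N (f z0) z * gaussPdf N zprior z0) z)
    (hαs : ∀ t, 1 ≤ t → ∀ z, α (t + 1) z =
      (A (t + 1)).indicator (fun z => ∫ z', gaussPdf N (f z') z * α t z') z)
    (hq1 : ∀ k, q 1 k = ∫ z0 in cellProd N K C k, gaussPdf N zprior z0)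
    (hqs : ∀ t, 1 ≤ t → ∀ k, q (t + 1) k =
      ∑ m : Fin N → Fin K, q t m *
        ∫ z in (cellProd N K C k ∩ A t), gaussPdf N (fun i => μt (m i)) z) :
    ∀ (T : ℕ) (t : ℕ), 1 ≤ t → t < T → ∃ c > 0, ∀ z : Fin N → ℝ,
      (∫ z', gaussPdf N (f z') z * α t z') =
      c * ∑ k : Fin N → Fin K, gaussPdf N (fun i => μt (k i)) z * q (t + 1) k := by
  intro T t ht _
  have hAmeas : ∀ t, MeasurableSet (A t) := fun t => hA t ▸ measurableSet_orderCone N (τ t)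
  have hα : α t = (A t).indicator (gaussMixture N K μt (q t)) :=
    filter_eq_indicator_gaussMixture hCmeas hCdisj hCcover hf hAmeas hα1 hαs hq1 hqs ht
  refine ⟨1, one_pos, fun z => ?_⟩
  rw [one_mul, hα, integral_gaussPdf_mul_indicator_gaussMixture hCmeas hCdisj hCcover hf
    (hAmeas t), ← funext (hqs t ht)]
  rfl

/-- one-step-ahead predictive distribution.  Under the same HMM
as in the filtering theorem, for each t = 1,...,T-1 the (unnormalized)
predictive density of z_{t+1} given the ranks τ_{1:t}, namely
∫ N(z_{t+1} | f(z'), I_N) α_t(z') dz', is proportional to the finite Gaussian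
mixture Σ_k N(z_{t+1} | μ̃_k, I_N) q_{k,t+1}. -/
theorem stmt_12 (N K : ℕ) (hN : 0 < N) (hK : 0 < K)
    (C : Fin K → Set ℝ)
    (hCmeas : ∀ k, MeasurableSet (C k))
    (hCdisj : ∀ k k' : Fin K, k ≠ k' → Disjoint (C k) (C k'))
    (hCcover : (⋃ k, C k) = Set.univ)
    (μt : Fin K → ℝ)
    (f : (Fin N → ℝ) → (Fin N → ℝ))
    (hf : ∀ (z : Fin N → ℝ) (i : Fin N) (k : Fin K), z i ∈ C k → f z i = μt k)
    (τ : ℕ → Equiv.Perm (Fin N))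
    (A : ℕ → Set (Fin N → ℝ))
    (hA : ∀ t, A t = orderCone N (τ t))
    (zprior : Fin N → ℝ)
    (α : ℕ → (Fin N → ℝ) → ℝ)
    (q : ℕ → (Fin N → Fin K) → ℝ)
    (hα1 : ∀ z, α 1 z =
      (A 1).indicator (fun z => ∫ z0, gaussPdf N (f z0) z * gaussPdf N zprior z0) z)
    (hαs : ∀ t, 1 ≤ t → ∀ z, α (t + 1) z =
      (A (t + 1)).indicator (fun z => ∫ z', gaussPdf N (f z') z * α t z') z)
    (hq1 : ∀ k, q 1 k = ∫ z0 in cellProd N K C k, gaussPdf N zprior z0)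
    (hqs : ∀ t, 1 ≤ t → ∀ k, q (t + 1) k =
      ∑ m : Fin N → Fin K, q t m *
        ∫ z in (cellProd N K C k ∩ A t), gaussPdf N (fun i => μt (m i)) z) :
    ∀ (T : ℕ) (t : ℕ), 1 ≤ t → t < T → ∃ c > 0, ∀ z : Fin N → ℝ,
      (∫ z', gaussPdf N (f z') z * α t z') =
      c * ∑ k : Fin N → Fin K, gaussPdf N (fun i => μt (k i)) z * q (t + 1) k :=
  stmt_12_general N K C hCmeas hCdisj hCcover μt f hf τ A hA zprior α q hα1 hαs hq1 hqs
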